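/- arXiv:0902.1615 — 2 statements merged into one kernel-verified Lean document; each statement's English description precedes it below -/
import Mathlib

section
/- If A and B are nonempty compact subsets of ℝⁿ with h̃(A,B) = 0, then there is an isometry φ of ℝⁿ with A = φ(B). -/
noncomputable def shapeDiff {n : ℕ} (A B : Set (EuclideanSpace ℝ (Fin n))) : ℝ :=
  sInf {r : ℝ | ∃ ψ : EuclideanSpace ℝ (Fin n) ≃ᵢ EuclideanSpace ℝ (Fin n),
    r = Metric.hausdorffDist A (ψ '' B)}

open Metric Filter Bornology Topology

set_option maxHeartbeats 1000000
set_option synthInstance.maxHeartbeats 400000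

theorem eq_image_isometry_of_shapeDiff_eq_zero {n : ℕ}
    (A B : Set (EuclideanSpace ℝ (Fin n)))
    (hA : IsCompact A) (hB : IsCompact B)
    (hAne : A.Nonempty) (hBne : B.Nonempty)
    (h : shapeDiff A B = 0) :
    ∃ φ : EuclideanSpace ℝ (Fin n) ≃ᵢ EuclideanSpace ℝ (Fin n), A = φ '' B := by
  obtain ⟨RA, hRA⟩ := hA.isBounded.exists_norm_le
  obtain ⟨RB, hRB⟩ := hB.isBounded.exists_norm_le
  obtain ⟨b0, hb0⟩ := id hBne
  obtain ⟨a0, ha0⟩ := id hAne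
  have hRA0 : 0 ≤ RA := le_trans (norm_nonneg a0) (hRA a0 ha0)
  have hRB0 : 0 ≤ RB := le_trans (norm_nonneg b0) (hRB b0 hb0)
  -- extract a sequence of isometries with Hausdorff distance → 0
  have key : ∀ k : ℕ, ∃ ψ : EuclideanSpace ℝ (Fin n) ≃ᵢ EuclideanSpace ℝ (Fin n),
      hausdorffDist A (ψ '' B) < 1 / (k + 1) := by
    intro k
    have hne : {r : ℝ | ∃ ψ : EuclideanSpace ℝ (Fin n) ≃ᵢ EuclideanSpace ℝ (Fin n),
        r = hausdorffDist A (ψ '' B)}.Nonempty :=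
      ⟨hausdorffDist A ((IsometryEquiv.refl _) '' B), IsometryEquiv.refl _, rfl⟩
    have hlt : shapeDiff A B < 1 / (k + 1) := by rw [h]; positivity
    obtain ⟨r, ⟨ψ, rfl⟩, hr⟩ := exists_lt_of_csInf_lt hne hlt
    exact ⟨ψ, hr⟩
  choose ψ hψ using key
  -- basic facts about ψ k '' B
  have himne : ∀ k, (ψ k '' B).Nonempty := fun k => hBne.image _
  have himbd : ∀ k, IsBounded (ψ k '' B) := fun k =>
    ((hB.image (ψ k).continuous)).isBounded
  have hfin : ∀ k, EMetric.hausdorffEdist A (ψ k '' B) ≠ ⊤ := fun k =>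
    hausdorffEdist_ne_top_of_nonempty_of_bounded hAne (himne k) hA.isBounded (himbd k)
  -- writing ψ k as linear isometry + translation
  set L : ℕ → (EuclideanSpace ℝ (Fin n) ≃ₗᵢ[ℝ] EuclideanSpace ℝ (Fin n)) := fun k => (ψ k).toRealLinearIsometryEquiv with hL
  set c : ℕ → EuclideanSpace ℝ (Fin n) := fun k => ψ k 0 with hc
  have hψeq : ∀ k x, ψ k x = L k x + c k := by
    intro k x
    have := (ψ k).toRealLinearIsometryEquiv_apply x
    simp only [hL, hc]
    rw [this]; abel
  set u : ℕ → (EuclideanSpace ℝ (Fin n) →L[ℝ] EuclideanSpace ℝ (Fin n)) × EuclideanSpace ℝ (Fin n) :=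
    fun k => ((L k).toLinearIsometry.toContinuousLinearMap, c k) with hu
  -- bounds : u k lies in a fixed closed ball
  set C : ℝ := max 1 (2 + RA + 2 * RB) with hC
  have huC : ∀ k, u k ∈ closedBall (0 : (EuclideanSpace ℝ (Fin n) →L[ℝ] EuclideanSpace ℝ (Fin n)) × EuclideanSpace ℝ (Fin n)) C := by
    intro k
    rw [mem_closedBall_zero_iff]
    have hL1 : ‖(L k).toLinearIsometry.toContinuousLinearMap‖ ≤ 1 := by
      apply ContinuousLinearMap.opNorm_le_bound _ zero_le_one
      intro x
      simp [LinearIsometry.norm_map]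
    have hck : ‖c k‖ ≤ 2 + RA + 2 * RB := by
      -- dist from ψ k b0 to A is small
      have h1 : infDist (ψ k b0) A ≤ hausdorffDist (ψ k '' B) A := by
        apply infDist_le_hausdorffDist_of_mem (Set.mem_image_of_mem _ hb0)
        rw [EMetric.hausdorffEdist_comm]; exact hfin k
      have h2 : hausdorffDist (ψ k '' B) A < 1 := by
        rw [hausdorffDist_comm]
        refine lt_of_lt_of_le (hψ k) ?_
        rw [div_le_one (by positivity)]
        linarith [Nat.cast_nonneg (α := ℝ) k]
      have h3 : infDist (ψ k b0) A < 2 := by linarith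
      obtain ⟨a, ha, hda⟩ := (infDist_lt_iff hAne).mp h3
      have h4 : ‖ψ k b0‖ ≤ 2 + RA := by
        calc ‖ψ k b0‖ ≤ dist (ψ k b0) a + ‖a‖ := by
              rw [dist_eq_norm]
              simpa using norm_add_le (ψ k b0 - a) a
          _ ≤ 2 + RA := by have := hRA a ha; linarith
      have h5 : c k = ψ k b0 - L k b0 := by rw [hψeq k b0]; abel
      calc ‖c k‖ = ‖ψ k b0 - L k b0‖ := by rw [h5]
        _ ≤ ‖ψ k b0‖ + ‖L k b0‖ := norm_sub_le _ _
        _ = ‖ψ k b0‖ + ‖b0‖ := by rw [(L k).norm_map]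
        _ ≤ 2 + RA + 2 * RB := by have := hRB b0 hb0; linarith
    rw [Prod.norm_def]
    exact max_le (le_trans hL1 (le_max_left _ _))
      (le_trans hck (le_max_right _ _))
  -- compactness
  have hKcompact : IsCompact (closedBall (0 : (EuclideanSpace ℝ (Fin n) →L[ℝ] EuclideanSpace ℝ (Fin n)) × EuclideanSpace ℝ (Fin n)) C) :=
    isCompact_closedBall _ _
  obtain ⟨p, hpK, g, hg, hconv⟩ := hKcompact.tendsto_subseq huC
  -- componentwise convergence
  have hconv1 : Tendsto (fun j => (u (g j)).1) atTop (𝓝 p.1) :=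
    (continuous_fst.tendsto p).comp hconv
  have hconv2 : Tendsto (fun j => (u (g j)).2) atTop (𝓝 p.2) :=
    (continuous_snd.tendsto p).comp hconv
  -- the limit map is a linear isometry
  have hnorm : ∀ x : EuclideanSpace ℝ (Fin n), ‖p.1 x‖ = ‖x‖ := by
    intro x
    have h1 : Tendsto (fun j => (u (g j)).1 x) atTop (𝓝 (p.1 x)) := by
      have hcont : Continuous fun f : EuclideanSpace ℝ (Fin n) →L[ℝ] EuclideanSpace ℝ (Fin n) => f x :=
        (ContinuousLinearMap.apply ℝ (EuclideanSpace ℝ (Fin n)) x).continuous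
      exact (hcont.tendsto p.1).comp hconv1
    have h2 : Tendsto (fun j => ‖(u (g j)).1 x‖) atTop (𝓝 ‖p.1 x‖) :=
      (continuous_norm.tendsto _).comp h1
    have h3 : (fun j => ‖(u (g j)).1 x‖) = fun _ => ‖x‖ := by
      funext j
      exact (L (g j)).norm_map x
    rw [h3] at h2
    exact (tendsto_const_nhds_iff.mp h2).symm
  set Li : EuclideanSpace ℝ (Fin n) →ₗᵢ[ℝ] EuclideanSpace ℝ (Fin n) := ⟨p.1.toLinearMap, hnorm⟩ with hLi
  set Leq : EuclideanSpace ℝ (Fin n) ≃ₗᵢ[ℝ] EuclideanSpace ℝ (Fin n) := Li.toLinearIsometryEquiv rfl with hLeq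
  set φ : EuclideanSpace ℝ (Fin n) ≃ᵢ EuclideanSpace ℝ (Fin n) := Leq.toIsometryEquiv.trans (IsometryEquiv.vaddConst p.2) with hφ
  have hφapp : ∀ x, φ x = p.1 x + p.2 := fun x => rfl
  refine ⟨φ, ?_⟩
  -- the image φ '' B
  have hφBcompact : IsCompact (φ '' B) := hB.image φ.continuous
  have hφBne : (φ '' B).Nonempty := hBne.image _
  have hfinφ : EMetric.hausdorffEdist A (φ '' B) ≠ ⊤ :=
    hausdorffEdist_ne_top_of_nonempty_of_bounded hAne hφBne hA.isBounded hφBcompact.isBounded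
  -- show hausdorffDist A (φ '' B) = 0
  have hmain : hausdorffDist A (φ '' B) = 0 := by
    have hbound : ∀ j, hausdorffDist A (φ '' B) ≤
        1 / (g j + 1) + (RB * ‖(u (g j)).1 - p.1‖ + ‖(u (g j)).2 - p.2‖) := by
      intro j
      set ε : ℝ := RB * ‖(u (g j)).1 - p.1‖ + ‖(u (g j)).2 - p.2‖ with hε
      have hε0 : 0 ≤ ε := by positivity
      have hdB : hausdorffDist (ψ (g j) '' B) (φ '' B) ≤ ε := by
        have hdd : ∀ b ∈ B, dist (ψ (g j) b) (φ b) ≤ ε := by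
          intro b hb
          rw [dist_eq_norm, hψeq, hφapp]
          have : L (g j) b + c (g j) - (p.1 b + p.2)
              = ((u (g j)).1 - p.1) b + ((u (g j)).2 - p.2) := by
            simp only [ContinuousLinearMap.sub_apply]
            have hrfl : (L (g j)).toLinearIsometry.toContinuousLinearMap b
                = L (g j) b := rfl
            rw [hrfl]
            abel
          rw [this]
          calc ‖((u (g j)).1 - p.1) b + ((u (g j)).2 - p.2)‖
              ≤ ‖((u (g j)).1 - p.1) b‖ + ‖(u (g j)).2 - p.2‖ := norm_add_le _ _
            _ ≤ ‖(u (g j)).1 - p.1‖ * ‖b‖ + ‖(u (g j)).2 - p.2‖ := by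
                have := ContinuousLinearMap.le_opNorm ((u (g j)).1 - p.1) b
                linarith
            _ ≤ ε := by
                have h1 := hRB b hb
                have h2 : (0:ℝ) ≤ ‖(u (g j)).1 - p.1‖ := norm_nonneg _
                have h3 : ‖(u (g j)).1 - p.1‖ * ‖b‖ ≤ ‖(u (g j)).1 - p.1‖ * RB :=
                  mul_le_mul_of_nonneg_left h1 h2
                rw [hε]; nlinarith
        apply hausdorffDist_le_of_mem_dist hε0
        · rintro x ⟨b, hb, rfl⟩
          exact ⟨φ b, Set.mem_image_of_mem _ hb, hdd b hb⟩
        · rintro x ⟨b, hb, rfl⟩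
          exact ⟨ψ (g j) b, Set.mem_image_of_mem _ hb, by
            rw [dist_comm]; exact hdd b hb⟩
      have htri : hausdorffDist A (φ '' B) ≤
          hausdorffDist A (ψ (g j) '' B) + hausdorffDist (ψ (g j) '' B) (φ '' B) :=
        hausdorffDist_triangle (hfin (g j))
      have := hψ (g j)
      linarith
    -- the RHS tends to 0
    have htend : Tendsto (fun j => 1 / ((g j : ℝ) + 1) +
        (RB * ‖(u (g j)).1 - p.1‖ + ‖(u (g j)).2 - p.2‖)) atTop (𝓝 0) := by
      have t1 : Tendsto (fun j => 1 / ((g j : ℝ) + 1)) atTop (𝓝 0) := by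
        apply Tendsto.comp (tendsto_one_div_add_atTop_nhds_zero_nat)
        exact hg.tendsto_atTop
      have t2 : Tendsto (fun j => ‖(u (g j)).1 - p.1‖) atTop (𝓝 0) := by
        have h0 : Tendsto (fun j => (u (g j)).1 - p.1) atTop (𝓝 0) := by
          simpa using hconv1.sub (tendsto_const_nhds (x := p.1))
        have := h0.norm
        rwa [norm_zero] at this
      have t3 : Tendsto (fun j => ‖(u (g j)).2 - p.2‖) atTop (𝓝 0) := by
        have h0 : Tendsto (fun j => (u (g j)).2 - p.2) atTop (𝓝 0) := by
          simpa using hconv2.sub (tendsto_const_nhds (x := p.2))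
        have := h0.norm
        rwa [norm_zero] at this
      have := t1.add ((t2.const_mul RB).add t3)
      simpa using this
    have hle : hausdorffDist A (φ '' B) ≤ 0 := ge_of_tendsto' htend hbound
    exact le_antisymm hle hausdorffDist_nonneg
  exact ((hA.isClosed.hausdorffDist_zero_iff_eq hφBcompact.isClosed hfinφ).mp hmain)
end

section
/- For nonempty compact sets A, B ⊆ ℝⁿ, the infimum defining h̃(A,B) is attained: there exists an isometry φ of ℝⁿ with h(A, φ(B)) = h̃(A,B). -/
/-!
By Mazur–Ulam every isometry of `ℝⁿ` is `x ↦ T x + v` with `T` a linear isometry, so the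
isometries are parametrized by pairs `(T, v)` in `(ℝⁿ →L[ℝ] ℝⁿ) × ℝⁿ`, on which
`(T, v) ↦ h(A, T '' B + v)` is Lipschitz. The linear isometries form a compact set, and an
isometry doing at least as well as the identity has translation part bounded in terms of `A`
and `B`. Minimizing over this compact set of parameters gives a global minimizer.
-/

open Metric Set Bornology

section HausdorffDist

variable {α X : Type*} [PseudoMetricSpace X]

theorem Metric.hausdorffDist_image_le_of_dist_le {f g : α → X} {s : Set α} {r : ℝ}
    (hr : 0 ≤ r) (h : ∀ x ∈ s, dist (f x) (g x) ≤ r) :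
    hausdorffDist (f '' s) (g '' s) ≤ r := by
  refine hausdorffDist_le_of_mem_dist hr ?_ ?_
  · rintro _ ⟨x, hx, rfl⟩
    exact ⟨g x, mem_image_of_mem g hx, h x hx⟩
  · rintro _ ⟨x, hx, rfl⟩
    exact ⟨f x, mem_image_of_mem f hx, dist_comm (f x) (g x) ▸ h x hx⟩

theorem Metric.dist_hausdorffDist_le {s t u : Set X} (hst : hausdorffEDist s t ≠ ⊤)
    (hsu : hausdorffEDist s u ≠ ⊤) :
    dist (hausdorffDist s t) (hausdorffDist s u) ≤ hausdorffDist t u := by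
  rw [Real.dist_eq, abs_sub_le_iff]
  constructor
  · linarith [hausdorffDist_triangle (u := t) hsu, hausdorffDist_comm (s := t) (t := u)]
  · linarith [hausdorffDist_triangle (u := u) hst]

theorem Metric.dist_le_hausdorffDist_add_diam {s t : Set X} {x y : X} (hs : IsBounded s)
    (hx : x ∈ s) (hy : y ∈ t) (hst : hausdorffEDist s t ≠ ⊤) :
    dist y x ≤ hausdorffDist s t + diam s := by
  have : infDist y s ≤ hausdorffDist s t := by
    rw [hausdorffDist_comm]
    exact infDist_le_hausdorffDist_of_mem hy (by rwa [hausdorffEDist_comm])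
  linarith [dist_le_infDist_add_diam (x := y) hs hx]

theorem Isometry.norm_apply_zero_le {E : Type*} [SeminormedAddCommGroup E] {ψ : E → E}
    (hψ : Isometry ψ) {A B : Set E} (hA : IsBounded A) {a b : E} (ha : a ∈ A) (hb : b ∈ B)
    (hfin : hausdorffEDist A (ψ '' B) ≠ ⊤) :
    ‖ψ 0‖ ≤ ‖b‖ + hausdorffDist A (ψ '' B) + diam A + ‖a‖ := by
  have hψb := dist_le_hausdorffDist_add_diam hA ha (mem_image_of_mem ψ hb) hfin
  calc ‖ψ 0‖ = dist (ψ 0) 0 := (dist_zero_right _).symm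
    _ ≤ dist (ψ 0) (ψ b) + dist (ψ b) a + dist a 0 := dist_triangle4 _ _ _ _
    _ ≤ ‖b‖ + hausdorffDist A (ψ '' B) + diam A + ‖a‖ := by
      rw [hψ.dist_eq, dist_zero_left, dist_zero_right]
      linarith

end HausdorffDist

section AffineIsometry

variable {E : Type*} [NormedAddCommGroup E] [NormedSpace ℝ E]

theorem IsometryEquiv.exists_norm_map_eq_add (ψ : E ≃ᵢ E) :
    ∃ T : E →L[ℝ] E, (∀ x, ‖T x‖ = ‖x‖) ∧ ∀ x, ψ x = T x + ψ 0 := by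
  refine ⟨ψ.toRealLinearIsometryEquiv.toLinearIsometry.toContinuousLinearMap,
    ψ.toRealLinearIsometryEquiv.norm_map, fun x => ?_⟩
  simp [IsometryEquiv.toRealLinearIsometryEquiv_apply]

theorem exists_isometryEquiv_eq_add [FiniteDimensional ℝ E] {T : E →L[ℝ] E}
    (hT : ∀ x, ‖T x‖ = ‖x‖) (v : E) : ∃ φ : E ≃ᵢ E, ∀ x, φ x = T x + v :=
  ⟨((⟨T.toLinearMap, hT⟩ : E →ₗᵢ[ℝ] E).toLinearIsometryEquiv rfl).toIsometryEquiv.trans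
    (IsometryEquiv.addRight v), fun _ => rfl⟩

theorem isCompact_setOf_norm_map_eq [FiniteDimensional ℝ E] :
    IsCompact {T : E →L[ℝ] E | ∀ x, ‖T x‖ = ‖x‖} := by
  have hclosed : IsClosed {T : E →L[ℝ] E | ∀ x, ‖T x‖ = ‖x‖} := by
    simp only [ofPred_forall]
    exact isClosed_iInter fun x =>
      isClosed_eq ((ContinuousLinearMap.apply ℝ E x).continuous.norm) continuous_const
  refine (isCompact_closedBall (0 : E →L[ℝ] E) 1).of_isClosed_subset hclosed fun T hT => ?_
  rw [mem_closedBall_zero_iff]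
  exact T.opNorm_le_bound zero_le_one fun x => by rw [hT x, one_mul]

theorem continuous_hausdorffDist_image_add {A B : Set E} (hA : IsBounded A)
    (hAne : A.Nonempty) (hB : IsCompact B) (hBne : B.Nonempty) :
    Continuous fun p : (E →L[ℝ] E) × E => hausdorffDist A ((fun x => p.1 x + p.2) '' B) := by
  obtain ⟨R, hR⟩ := hB.isBounded.subset_closedBall 0
  have hR0 : 0 ≤ R :=
    hBne.elim fun b hb => (norm_nonneg b).trans (mem_closedBall_zero_iff.mp (hR hb))
  have hfin (p : (E →L[ℝ] E) × E) : hausdorffEDist A ((fun x => p.1 x + p.2) '' B) ≠ ⊤ :=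
    hausdorffEDist_ne_top_of_nonempty_of_bounded hAne (hBne.image _) hA
      (hB.image (by fun_prop)).isBounded
  refine (LipschitzWith.of_dist_le' (K := R + 1) fun p q => ?_).continuous
  refine (dist_hausdorffDist_le (hfin p) (hfin q)).trans
    (hausdorffDist_image_le_of_dist_le (by positivity) fun b hb => ?_)
  have hbR : ‖b‖ ≤ R := mem_closedBall_zero_iff.mp (hR hb)
  have hT : dist p.1 q.1 ≤ dist p q := le_max_left _ _
  have hv : dist p.2 q.2 ≤ dist p q := le_max_right _ _
  calc dist (p.1 b + p.2) (q.1 b + q.2) ≤ dist (p.1 b) (q.1 b) + dist p.2 q.2 :=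
        dist_add_add_le _ _ _ _
    _ ≤ dist p.1 q.1 * R + dist p.2 q.2 := by
      gcongr
      rw [dist_eq_norm, dist_eq_norm, ← ContinuousLinearMap.sub_apply']
      exact ((p.1 - q.1).le_opNorm b).trans (by gcongr)
    _ ≤ (R + 1) * dist p q := by nlinarith [mul_le_mul_of_nonneg_right hT hR0]

theorem exists_isometryEquiv_forall_hausdorffDist_le [FiniteDimensional ℝ E] {A B : Set E}
    (hA : IsCompact A) (hB : IsCompact B) (hAne : A.Nonempty) (hBne : B.Nonempty) :
    ∃ φ : E ≃ᵢ E, ∀ ψ : E ≃ᵢ E, hausdorffDist A (φ '' B) ≤ hausdorffDist A (ψ '' B) := by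
  obtain ⟨a, ha⟩ := hAne
  obtain ⟨b, hb⟩ := hBne
  have hfin (ψ : E ≃ᵢ E) : hausdorffEDist A (ψ '' B) ≠ ⊤ :=
    hausdorffEDist_ne_top_of_nonempty_of_bounded ⟨a, ha⟩ ⟨ψ b, mem_image_of_mem ψ hb⟩
      hA.isBounded (hB.image ψ.continuous).isBounded
  set F := fun p : (E →L[ℝ] E) × E => hausdorffDist A ((fun x => p.1 x + p.2) '' B)
  set D := hausdorffDist A B
  set K := {T : E →L[ℝ] E | ∀ x, ‖T x‖ = ‖x‖} ×ˢ closedBall (0 : E) (‖b‖ + D + diam A + ‖a‖)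
  have hF_image (ψ : E ≃ᵢ E) {T : E →L[ℝ] E} {v : E} (hψ : ∀ x, ψ x = T x + v) :
      F (T, v) = hausdorffDist A (ψ '' B) := by
    simp only [F, ← hψ]
  have hidK : ((1 : E →L[ℝ] E), (0 : E)) ∈ K :=
    ⟨fun x => rfl, mem_closedBall_zero_iff.mpr (by
      rw [norm_zero]
      linarith [norm_nonneg a, norm_nonneg b, hausdorffDist_nonneg (s := A) (t := B),
        diam_nonneg (s := A)])⟩
  have hF_id : F (1, 0) = D := by simp [F, D]
  have hK_compact : IsCompact K := isCompact_setOf_norm_map_eq.prod (isCompact_closedBall _ _)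
  obtain ⟨p, hpK, hp_min⟩ := hK_compact.exists_isMinOn ⟨_, hidK⟩
    (continuous_hausdorffDist_image_add hA.isBounded ⟨a, ha⟩ hB ⟨b, hb⟩).continuousOn
  obtain ⟨φ, hφ⟩ := exists_isometryEquiv_eq_add hpK.1 p.2
  refine ⟨φ, fun ψ => ?_⟩
  rw [← hF_image φ hφ]
  obtain ⟨T, hT, hψ⟩ := ψ.exists_norm_map_eq_add
  by_cases hψD : hausdorffDist A (ψ '' B) ≤ D
  · have hK : (T, ψ 0) ∈ K := ⟨hT, mem_closedBall_zero_iff.mpr <|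
      (ψ.isometry.norm_apply_zero_le hA.isBounded ha hb (hfin ψ)).trans (by linarith)⟩
    exact (hp_min hK).trans_eq (hF_image ψ hψ)
  · exact (hp_min hidK).trans (hF_id.trans_le (not_le.mp hψD).le)

end AffineIsometry

theorem shapeDiff_attained {n : ℕ}
    (A B : Set (EuclideanSpace ℝ (Fin n)))
    (hA : IsCompact A) (hB : IsCompact B)
    (hAne : A.Nonempty) (hBne : B.Nonempty) :
    ∃ φ : EuclideanSpace ℝ (Fin n) ≃ᵢ EuclideanSpace ℝ (Fin n),
      Metric.hausdorffDist A (φ '' B) = shapeDiff A B := by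
  obtain ⟨φ, hφ⟩ := exists_isometryEquiv_forall_hausdorffDist_le hA hB hAne hBne
  have hleast : IsLeast {r : ℝ | ∃ ψ : EuclideanSpace ℝ (Fin n) ≃ᵢ EuclideanSpace ℝ (Fin n),
      r = hausdorffDist A (ψ '' B)} (hausdorffDist A (φ '' B)) :=
    ⟨⟨φ, rfl⟩, by rintro _ ⟨ψ, rfl⟩; exact hφ ψ⟩
  exact ⟨φ, hleast.csInf_eq.symm⟩
end
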